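/- Under the same hypotheses, the function ∂ = cos(2aψ) satisfies ∂²·(∂')² = 4a²(1 - ∂²)(d² - λ²), where d = cos ψ. -/
import Mathlib


open Complex

lemma analyticAt_ccos_comp {f : ℂ → ℂ} {x : ℂ} (hf : AnalyticAt ℂ f x) :
    AnalyticAt ℂ (fun z => Complex.cos (f z)) x := by
  simp only [Complex.cos]
  exact (((hf.mul analyticAt_const).cexp.add ((hf.neg.mul analyticAt_const).cexp)).div
    analyticAt_const (by norm_num))

/-- Under the same hypotheses as for `d`, the auxiliary function `∂ = cos (2aψ)` satisfies
`∂² (∂')² = 4a² (1 - ∂²)(d² - λ²)` where `d = cos ψ` and `λ² = 1 - κ²`. -/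
theorem partial_diff_eq (κ lam : ℝ) (hκ : κ ∈ Set.Ioo (0 : ℝ) 1) (hlam : lam ^ 2 = 1 - κ ^ 2)
    (a : ℂ) (U : Set ℂ) (hU : IsOpen U) (hUc : IsPreconnected U) (h0 : (0 : ℂ) ∈ U)
    (φ ψ : ℂ → ℂ) (hφ : ∀ z ∈ U, AnalyticAt ℂ φ z) (hψ : ∀ z ∈ U, AnalyticAt ℂ ψ z)
    (hφ0 : φ 0 = 0) (hψ0 : ψ 0 = 0)
    (hφ' : ∀ z ∈ U, deriv φ z = Complex.cos (ψ z) / Complex.cos (2 * a * ψ z))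
    (hsin : ∀ z ∈ U, Complex.sin (ψ z) = (κ : ℂ) * Complex.sin (φ z)) :
    ∀ z ∈ U, Complex.cos (2 * a * ψ z) ^ 2 *
        (deriv (fun w => Complex.cos (2 * a * ψ w)) z) ^ 2 =
      4 * a ^ 2 * (1 - Complex.cos (2 * a * ψ z) ^ 2) *
        (Complex.cos (ψ z) ^ 2 - (lam : ℝ) ^ 2) := by
  have hψU : AnalyticOnNhd ℂ ψ U := hψ
  have hφU : AnalyticOnNhd ℂ φ U := hφ
  have hψ' : AnalyticOnNhd ℂ (deriv ψ) U := hψU.deriv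
  have hcosψ : AnalyticOnNhd ℂ (fun z => Complex.cos (ψ z)) U :=
    fun z hz => analyticAt_ccos_comp (hψ z hz)
  have hcosφ : AnalyticOnNhd ℂ (fun z => Complex.cos (φ z)) U :=
    fun z hz => analyticAt_ccos_comp (hφ z hz)
  have hcos2 : AnalyticOnNhd ℂ (fun z => Complex.cos (2 * a * ψ z)) U :=
    fun z hz => analyticAt_ccos_comp (analyticAt_const.mul (hψ z hz))
  have hlamC : (lam : ℂ) ^ 2 = 1 - (κ : ℂ) ^ 2 := by exact_mod_cast hlam
  -- differentiate sin ψ = κ sin φ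
  have hder : ∀ z ∈ U, Complex.cos (ψ z) * deriv ψ z =
      (κ : ℂ) * Complex.cos (φ z) * (Complex.cos (ψ z) / Complex.cos (2 * a * ψ z)) := by
    intro z hz
    have hψd : DifferentiableAt ℂ ψ z := (hψ z hz).differentiableAt
    have hφd : DifferentiableAt ℂ φ z := (hφ z hz).differentiableAt
    have heq : (fun w => Complex.sin (ψ w)) =ᶠ[nhds z] (fun w => (κ : ℂ) * Complex.sin (φ w)) :=
      Filter.eventuallyEq_of_mem (hU.mem_nhds hz) hsin
    have h1 : deriv (fun w => Complex.sin (ψ w)) z = Complex.cos (ψ z) * deriv ψ z :=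
      (hψd.hasDerivAt.csin).deriv
    have h2 : deriv (fun w => (κ : ℂ) * Complex.sin (φ w)) z =
        (κ : ℂ) * (Complex.cos (φ z) * deriv φ z) :=
      ((hφd.hasDerivAt.csin).const_mul _).deriv
    have h3 := heq.deriv_eq
    rw [h1, h2, hφ' z hz] at h3
    rw [h3]; ring
  -- identity theorem: multiply through by cos (2aψ)
  have hEq : Set.EqOn (fun z => Complex.cos (ψ z) * deriv ψ z * Complex.cos (2 * a * ψ z))
      (fun z => (κ : ℂ) * Complex.cos (φ z) * Complex.cos (ψ z)) U := by
    apply AnalyticOnNhd.eqOn_of_preconnected_of_eventuallyEq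
      ((hcosψ.mul hψ').mul hcos2) ((analyticOnNhd_const.mul hcosφ).mul hcosψ) hUc h0
    have hcont2 : ContinuousAt (fun z => Complex.cos (2 * a * ψ z)) 0 :=
      (hcos2 0 h0).continuousAt
    have hne2 : ∀ᶠ z in nhds 0, Complex.cos (2 * a * ψ z) ≠ 0 :=
      hcont2.eventually_ne (by simp [hψ0])
    filter_upwards [hne2, hU.mem_nhds h0] with z h2 hz
    rw [hder z hz, mul_assoc, div_mul_cancel₀ _ h2]
  -- κ² cos² φ = cos² ψ - λ²
  have hkcos : ∀ z ∈ U, (κ : ℂ) ^ 2 * Complex.cos (φ z) ^ 2 =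
      Complex.cos (ψ z) ^ 2 - (lam : ℂ) ^ 2 := by
    intro z hz
    have hs := hsin z hz
    have hA := Complex.sin_sq_add_cos_sq (φ z)
    have hB := Complex.sin_sq_add_cos_sq (ψ z)
    linear_combination (κ : ℂ) ^ 2 * hA - hB + hlamC +
      (Complex.sin (ψ z) + (κ : ℂ) * Complex.sin (φ z)) * hs
  -- cos²ψ · G = 0 on U
  have hGz : ∀ z ∈ U, Complex.cos (ψ z) ^ 2 *
      (Complex.cos (2 * a * ψ z) ^ 2 * (deriv ψ z) ^ 2 -
        (Complex.cos (ψ z) ^ 2 - (lam : ℂ) ^ 2)) = 0 := by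
    intro z hz
    have h1 := hEq hz
    have h2 := hkcos z hz
    simp only at h1
    linear_combination (Complex.cos (ψ z) * deriv ψ z * Complex.cos (2 * a * ψ z) +
      (κ : ℂ) * Complex.cos (φ z) * Complex.cos (ψ z)) * h1 + Complex.cos (ψ z) ^ 2 * h2
  -- identity theorem again: G = 0 on U
  have hGanal : AnalyticOnNhd ℂ (fun z => Complex.cos (2 * a * ψ z) ^ 2 * (deriv ψ z) ^ 2 -
      (Complex.cos (ψ z) ^ 2 - (lam : ℂ) ^ 2)) U :=
    ((hcos2.pow 2).mul (hψ'.pow 2)).sub ((hcosψ.pow 2).sub analyticOnNhd_const)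
  have hGU : Set.EqOn (fun z => Complex.cos (2 * a * ψ z) ^ 2 * (deriv ψ z) ^ 2 -
      (Complex.cos (ψ z) ^ 2 - (lam : ℂ) ^ 2)) 0 U := by
    apply hGanal.eqOn_zero_of_preconnected_of_eventuallyEq_zero hUc h0
    have hcontψ : ContinuousAt (fun z => Complex.cos (ψ z)) 0 := (hcosψ 0 h0).continuousAt
    have hneψ : ∀ᶠ z in nhds 0, Complex.cos (ψ z) ≠ 0 := hcontψ.eventually_ne (by simp [hψ0])
    filter_upwards [hneψ, hU.mem_nhds h0] with z hne hz
    have h := hGz z hz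
    have hc2 : Complex.cos (ψ z) ^ 2 ≠ 0 := pow_ne_zero _ hne
    exact (mul_eq_zero.mp h).resolve_left hc2
  -- conclusion
  intro z hz
  have hψd : DifferentiableAt ℂ ψ z := (hψ z hz).differentiableAt
  have h1 : HasDerivAt (fun w => 2 * a * ψ w) (2 * a * deriv ψ z) z :=
    (hψd.hasDerivAt.const_mul (2 * a))
  have hd : HasDerivAt (fun w => Complex.cos (2 * a * ψ w))
      (-Complex.sin (2 * a * ψ z) * (2 * a * deriv ψ z)) z := h1.ccos
  rw [hd.deriv]
  have hG := hGU hz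
  simp only [Pi.zero_apply] at hG
  have hsin2 := Complex.sin_sq_add_cos_sq (2 * a * ψ z)
  linear_combination 4 * a ^ 2 * Complex.sin (2 * a * ψ z) ^ 2 * hG +
    4 * a ^ 2 * (Complex.cos (ψ z) ^ 2 - (lam : ℂ) ^ 2) * hsin2
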